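/- arXiv:2201.08604 — 6 statements merged into one kernel-verified Lean document; each statement's English description precedes it below -/
import Mathlib

section
/- Let z₁, …, zₙ be real numbers, γ > 0, and let φₙ(t) = (1/n) ∑_{j=1}^n e^{i t z_j} be their empirical characteristic function. Then n ∫_{−∞}^{∞} |φₙ(t) − e^{-t²/2}|² e^{-γ t²} dt = √(π/γ) (1/n) ∑_{j,k=1}^n e^{-(z_j − z_k)²/(4γ)} + n √(π/(1+γ)) − 2 √(2π/(1+2γ)) ∑_{j=1}^n e^{-z_j²/(2+4γ)}. -/
/-!
Expanding the square, `|φₙ(t) - e^{-t²/2}|²` equals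
`n⁻² ∑_{j,k} cos((z_j - z_k) t) - 2 n⁻¹ e^{-t²/2} ∑_j cos(z_j t) + e^{-t²}`,
so after multiplying by the weight every term is a Gaussian cosine integral
`∫ cos(b t) e^{-a t²} dt = √(π/a) e^{-b²/(4a)}`, the real part of the Fourier transform of a
Gaussian.
-/

open MeasureTheory Real Complex

theorem sq_norm_sum_exp_ofReal_mul_I {ι : Type*} [Fintype ι] (x : ι → ℝ) :
    ‖∑ j, cexp (x j * I)‖ ^ 2 = ∑ j, ∑ k, Real.cos (x j - x k) := by
  have hconj : ∀ k, starRingEnd ℂ (cexp (x k * I)) = cexp (-(x k) * I) := fun k => by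
    rw [← exp_conj, map_mul, conj_ofReal, conj_I, mul_neg, ← neg_mul]
  rw [Complex.sq_norm, ← ofReal_re (normSq _), ← mul_conj, map_sum, Finset.sum_mul_sum, re_sum]
  simp_rw [hconj, ← Complex.exp_add, re_sum, ← add_mul, ← sub_eq_add_neg, ← ofReal_sub,
    exp_ofReal_mul_I_re]

theorem sq_norm_ofReal_mul_sub_ofReal (r c : ℝ) (w : ℂ) :
    ‖(r : ℂ) * w - c‖ ^ 2 = r ^ 2 * ‖w‖ ^ 2 - 2 * r * c * w.re + c ^ 2 := by
  simp only [Complex.sq_norm, normSq_sub, normSq_mul, normSq_ofReal, conj_ofReal, re_mul_ofReal,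
    re_ofReal_mul]
  ring

theorem integrable_cos_mul_exp_neg_mul_sq {a : ℝ} (ha : 0 < a) (b : ℝ) :
    Integrable fun t : ℝ => Real.cos (b * t) * Real.exp (-a * t ^ 2) := by
  refine (integrable_exp_neg_mul_sq ha).mono' (Continuous.aestronglyMeasurable (by fun_prop))
    (.of_forall fun t => ?_)
  rw [norm_mul, Real.norm_of_nonneg (Real.exp_pos _).le]
  exact mul_le_of_le_one_left (Real.exp_pos _).le (Real.abs_cos_le_one _)

theorem integral_cos_mul_exp_neg_mul_sq {a : ℝ} (ha : 0 < a) (b : ℝ) :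
    ∫ t : ℝ, Real.cos (b * t) * Real.exp (-a * t ^ 2)
      = √(π / a) * Real.exp (-b ^ 2 / (4 * a)) := by
  have ha' : 0 < (a : ℂ).re := by simpa using ha
  have hre : ∀ t : ℝ, (cexp (I * b * t) * cexp (-a * t ^ 2)).re
      = Real.cos (b * t) * Real.exp (-a * t ^ 2) := fun t => by
    rw [show I * b * t = ((b * t : ℝ) : ℂ) * I by push_cast; ring,
      show -(a : ℂ) * t ^ 2 = ((-a * t ^ 2 : ℝ) : ℂ) by push_cast; ring,
      ← ofReal_exp, re_mul_ofReal, exp_ofReal_mul_I_re]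
  have hint : Integrable fun t : ℝ => cexp (I * b * t) * cexp (-a * t ^ 2) := by
    simpa [← Complex.exp_add, add_comm] using integrable_cexp_quadratic ha' (I * b) 0
  have hsqrt : ((π : ℂ) / a) ^ (1 / 2 : ℂ) = (√(π / a) : ℂ) := by
    rw [sqrt_eq_rpow, ofReal_cpow (div_pos pi_pos ha).le]
    push_cast
    rfl
  calc ∫ t : ℝ, Real.cos (b * t) * Real.exp (-a * t ^ 2)
      = (∫ t : ℝ, cexp (I * b * t) * cexp (-a * t ^ 2)).re := by
        simp_rw [← hre]; exact integral_re hint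
    _ = √(π / a) * Real.exp (-b ^ 2 / (4 * a)) := by
        rw [fourierIntegral_gaussian ha', hsqrt,
          show -(b : ℂ) ^ 2 / (4 * a) = ((-b ^ 2 / (4 * a) : ℝ) : ℂ) by push_cast; ring,
          ← ofReal_exp, ← ofReal_mul, ofReal_re]

theorem integral_sum_cos_mul_exp_neg_mul_sq {ι : Type*} [Fintype ι] {a : ℝ} (ha : 0 < a)
    (b : ι → ℝ) :
    ∫ t : ℝ, ∑ i, Real.cos (b i * t) * Real.exp (-a * t ^ 2)
      = √(π / a) * ∑ i, Real.exp (-b i ^ 2 / (4 * a)) := by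
  rw [integral_finsetSum _ fun i _ => integrable_cos_mul_exp_neg_mul_sq ha (b i), Finset.mul_sum]
  simp_rw [integral_cos_mul_exp_neg_mul_sq ha]

theorem sq_norm_ofReal_mul_sum_cexp_sub_gaussian_mul_exp {ι : Type*} [Fintype ι] (r γ t : ℝ)
    (z : ι → ℝ) :
    ‖(r : ℂ) * ∑ j, cexp (I * t * z j) - (Real.exp (-t ^ 2 / 2) : ℂ)‖ ^ 2
        * Real.exp (-γ * t ^ 2)
      = r ^ 2 * ∑ p : ι × ι, Real.cos ((z p.1 - z p.2) * t) * Real.exp (-γ * t ^ 2)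
        - 2 * r * ∑ j, Real.cos (z j * t) * Real.exp (-(1 / 2 + γ) * t ^ 2)
        + Real.exp (-(1 + γ) * t ^ 2) := by
  have hI : ∀ j, I * t * z j = ((z j * t : ℝ) : ℂ) * I := fun j => by push_cast; ring
  have hE₁ :
      Real.exp (-(1 / 2 + γ) * t ^ 2) = Real.exp (-t ^ 2 / 2) * Real.exp (-γ * t ^ 2) := by
    rw [← Real.exp_add]; ring_nf
  have hE₂ :
      Real.exp (-(1 + γ) * t ^ 2) = Real.exp (-t ^ 2 / 2) ^ 2 * Real.exp (-γ * t ^ 2) := by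
    rw [← Real.exp_nat_mul, ← Real.exp_add]; ring_nf
  simp_rw [hI]
  rw [sq_norm_ofReal_mul_sub_ofReal, sq_norm_sum_exp_ofReal_mul_I fun j => z j * t, re_sum]
  simp only [exp_ofReal_mul_I_re, ← sub_mul, Fintype.sum_prod_type, hE₁, hE₂,
    ← Finset.sum_mul]
  ring

/-- For real numbers `z₁,…,zₙ`, `γ > 0`, and `φₙ` their empirical
characteristic function,
`n ∫ |φₙ(t) − e^{−t²/2}|² e^{−γt²} dt
  = √(π/γ) (1/n) ∑_{j,k} e^{−(zⱼ−z_k)²/(4γ)} + n √(π/(1+γ))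
    − 2 √(2π/(1+2γ)) ∑ⱼ e^{−zⱼ²/(2+4γ)}`. -/
theorem bhep_statistic_formula (n : ℕ) (hn : 0 < n) (z : Fin n → ℝ)
    (γ : ℝ) (hγ : 0 < γ) :
    (n : ℝ) * ∫ t : ℝ,
        (‖(n : ℂ)⁻¹ * ∑ j, Complex.exp (Complex.I * t * z j)
            - (Real.exp (-t ^ 2 / 2) : ℂ)‖) ^ 2 * Real.exp (-γ * t ^ 2) =
      Real.sqrt (π / γ) * ((n : ℝ)⁻¹ *
          ∑ j, ∑ k, Real.exp (-(z j - z k) ^ 2 / (4 * γ)))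
        + (n : ℝ) * Real.sqrt (π / (1 + γ))
        - 2 * Real.sqrt (2 * π / (1 + 2 * γ)) *
            ∑ j, Real.exp (-(z j) ^ 2 / (2 + 4 * γ)) := by
  have hγ₁ : 0 < 1 + γ := by positivity
  have hγ₂ : 0 < 1 / 2 + γ := by positivity
  have i₁ : Integrable fun t : ℝ =>
      ∑ p : Fin n × Fin n, Real.cos ((z p.1 - z p.2) * t) * Real.exp (-γ * t ^ 2) :=
    integrable_finsetSum _ fun p _ => integrable_cos_mul_exp_neg_mul_sq hγ _
  have i₂ : Integrable fun t : ℝ =>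
      ∑ j, Real.cos (z j * t) * Real.exp (-(1 / 2 + γ) * t ^ 2) :=
    integrable_finsetSum _ fun j _ => integrable_cos_mul_exp_neg_mul_sq hγ₂ _
  simp_rw [← ofReal_natCast, ← ofReal_inv, sq_norm_ofReal_mul_sum_cexp_sub_gaussian_mul_exp]
  rw [integral_add (by exact (i₁.const_mul _).sub (i₂.const_mul _))
      (integrable_exp_neg_mul_sq hγ₁),
    integral_sub (i₁.const_mul _) (i₂.const_mul _), integral_const_mul, integral_const_mul,
    integral_sum_cos_mul_exp_neg_mul_sq hγ (fun p : Fin n × Fin n => z p.1 - z p.2),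
    integral_sum_cos_mul_exp_neg_mul_sq hγ₂, integral_gaussian,
    Fintype.sum_prod_type' fun j k => Real.exp (-(z j - z k) ^ 2 / (4 * γ)),
    show π / (1 / 2 + γ) = 2 * π / (1 + 2 * γ) by field_simp]
  simp_rw [show 4 * (1 / 2 + γ) = 2 + 4 * γ by ring]
  field_simp
  ring
end

section
/- Let X, X₁, X₂ be independent identically distributed real random variables, let μ ∈ ℝ and σ > 0, let ψ(t) = E[e^{i t (X−μ)/σ}], and let γ > 0. Assume all expectations below are finite. Then ∫_{−∞}^{∞} |ψ(t) − e^{-t²/2}|² e^{-γ t²} dt = √(π/(1+γ)) + √(π/γ) E[ exp( −(X₁−X₂)²/(4γσ²) ) ] − 2 √(2π/(1+2γ)) E[ exp( −(X₁−μ)²/((2+4γ)σ²) ) ]. -/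
open MeasureTheory Real

/-!
Expand `‖ψ - g‖² = |ψ|² - 2 g Re ψ + g²` for the Gaussian `g(t) = e^{-t²/2}`.
The term `|ψ|²` is the characteristic function of `(X₁ - X₂)/σ`, and by Fubini, integrating
the characteristic function of a law `ν` against `e^{-a t²}` gives `∫ √(π/a) e^{-x²/(4a)} dν(x)`,
the Fourier transform of the Gaussian weight averaged over `ν`.
-/

open Complex in
lemma integral_cexp_mul_I_mul_gaussian {a : ℝ} (ha : 0 < a) (x : ℝ) :
    ∫ t : ℝ, cexp (t * x * I) * (rexp (-a * t ^ 2) : ℂ) =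
      (√(π / a) * rexp (-x ^ 2 / (4 * a)) : ℝ) := by
  have h := fourierIntegral_gaussian (b := (a : ℂ)) (by simpa using ha) (x : ℂ)
  have hsqrt : ((π : ℂ) / a) ^ (1 / 2 : ℂ) = (√(π / a) : ℝ) := by
    rw [Real.sqrt_eq_rpow, ofReal_cpow (by positivity)]
    push_cast
    ring_nf
  rw [hsqrt] at h
  push_cast
  rw [← h]
  congr 1 with t
  ring_nf

lemma sq_norm_sub_gaussian_mul_gaussian (z : ℂ) (γ t : ℝ) :
    ‖z - (rexp (-t ^ 2 / 2) : ℂ)‖ ^ 2 * rexp (-γ * t ^ 2) =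
      Complex.normSq z * rexp (-γ * t ^ 2) - 2 * (z.re * rexp (-(1 / 2 + γ) * t ^ 2))
        + rexp (-(1 + γ) * t ^ 2) := by
  have h_half : rexp (-(1 / 2 + γ) * t ^ 2) = rexp (-t ^ 2 / 2) * rexp (-γ * t ^ 2) := by
    rw [← exp_add]
    ring_nf
  have h_one : rexp (-(1 + γ) * t ^ 2) =
      rexp (-t ^ 2 / 2) * rexp (-t ^ 2 / 2) * rexp (-γ * t ^ 2) := by
    rw [← exp_add, ← exp_add]
    ring_nf
  rw [h_half, h_one, Complex.sq_norm, Complex.normSq_sub, Complex.normSq_ofReal,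
    Complex.conj_ofReal, Complex.re_mul_ofReal]
  ring

section CharFun

variable {α : Type*} [MeasurableSpace α] {f : α → ℝ}

lemma charFun_map_real {Q : Measure α} (hf : Measurable f) (t : ℝ) :
    charFun (Q.map f) t = ∫ x, Complex.exp (t * f x * Complex.I) ∂Q := by
  rw [charFun_apply_real, integral_map hf.aemeasurable (by fun_prop)]

lemma charFun_map_mul_conj (Q : Measure α) [SFinite Q] (hf : Measurable f) (t : ℝ) :
    charFun (Q.map f) t * starRingEnd ℂ (charFun (Q.map f) t) =
      charFun ((Q.prod Q).map fun p ↦ f p.1 - f p.2) t := by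
  rw [charFun_map_real hf, charFun_map_real (by fun_prop), ← integral_conj,
    ← integral_prod_mul]
  congr 1 with p
  rw [← Complex.exp_conj, ← Complex.exp_add]
  simp only [map_mul, Complex.conj_ofReal, Complex.conj_I]
  push_cast
  ring_nf

end CharFun

section Gaussian

variable (ν : Measure ℝ) [IsFiniteMeasure ν] {a : ℝ}

lemma integrable_charFun_mul_gaussian (ha : 0 < a) :
    Integrable fun t : ℝ ↦ charFun ν t * (rexp (-a * t ^ 2) : ℂ) :=
  (integrable_exp_neg_mul_sq ha).ofReal.bdd_mul continuous_charFun.aestronglyMeasurable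
    (ae_of_all _ norm_charFun_le)

lemma integrable_re_charFun_mul_gaussian (ha : 0 < a) :
    Integrable fun t : ℝ ↦ (charFun ν t).re * rexp (-a * t ^ 2) := by
  simpa only [RCLike.re_to_complex, Complex.re_mul_ofReal] using
    (integrable_charFun_mul_gaussian ν ha).re

lemma integral_charFun_mul_gaussian (ha : 0 < a) :
    ∫ t : ℝ, charFun ν t * (rexp (-a * t ^ 2) : ℂ) =
      (√(π / a) * ∫ x, rexp (-x ^ 2 / (4 * a)) ∂ν : ℝ) := by
  have hint : Integrable (Function.uncurry fun (t x : ℝ) ↦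
      Complex.exp (t * x * Complex.I) * (rexp (-a * t ^ 2) : ℂ)) (volume.prod ν) := by
    refine ((integrable_exp_neg_mul_sq ha).mul_prod (integrable_const (1 : ℝ))).mono'
      (by fun_prop) (ae_of_all _ fun p ↦ ?_)
    rw [Function.uncurry_apply_pair, norm_mul, ← Complex.ofReal_mul,
      Complex.norm_exp_ofReal_mul_I, Complex.norm_real, norm_of_nonneg (exp_pos _).le, one_mul,
      mul_one]
  simp_rw [charFun_apply_real, ← integral_mul_const]
  rw [integral_integral_swap hint]
  simp_rw [integral_cexp_mul_I_mul_gaussian ha]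
  rw [integral_complex_ofReal, integral_const_mul]

lemma integral_re_charFun_mul_gaussian (ha : 0 < a) :
    ∫ t : ℝ, (charFun ν t).re * rexp (-a * t ^ 2) =
      √(π / a) * ∫ x, rexp (-x ^ 2 / (4 * a)) ∂ν := by
  simpa only [RCLike.re_to_complex, Complex.re_mul_ofReal, Complex.ofReal_re] using
    (integral_re (integrable_charFun_mul_gaussian ν ha)).trans
      (congrArg Complex.re (integral_charFun_mul_gaussian ν ha))

end Gaussian

lemma integral_re_charFun_map_mul_gaussian {α : Type*} [MeasurableSpace α] (Q : Measure α)
    [IsFiniteMeasure Q] {f : α → ℝ} (hf : Measurable f) {a : ℝ} (ha : 0 < a) :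
    ∫ t : ℝ, (charFun (Q.map f) t).re * rexp (-a * t ^ 2) =
      √(π / a) * ∫ x, rexp (-f x ^ 2 / (4 * a)) ∂Q := by
  rw [integral_re_charFun_mul_gaussian _ ha, integral_map hf.aemeasurable (by fun_prop)]

theorem bhep_population_limit_general (P : Measure ℝ) [IsProbabilityMeasure P]
    (μ : ℝ) (σ : ℝ) (γ : ℝ) (hγ : 0 < γ)
    (ψ : ℝ → ℂ)
    (hψ : ∀ t : ℝ, ψ t = ∫ x, Complex.exp (Complex.I * t * ((x - μ) / σ)) ∂P) :
    ∫ t : ℝ, (‖ψ t - (Real.exp (-t ^ 2 / 2) : ℂ)‖) ^ 2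
        * Real.exp (-γ * t ^ 2) =
      Real.sqrt (π / (1 + γ))
        + Real.sqrt (π / γ) *
            ∫ p : ℝ × ℝ, Real.exp (-(p.1 - p.2) ^ 2 / (4 * γ * σ ^ 2)) ∂(P.prod P)
        - 2 * Real.sqrt (2 * π / (1 + 2 * γ)) *
            ∫ x : ℝ, Real.exp (-(x - μ) ^ 2 / ((2 + 4 * γ) * σ ^ 2)) ∂P := by
  set f : ℝ → ℝ := fun x ↦ (x - μ) / σ
  have hf : Measurable f := by fun_prop
  have hψ_eq : ∀ t, ψ t = charFun (P.map f) t := fun t ↦ by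
    rw [hψ, charFun_map_real hf]
    congr 1 with x
    push_cast [f]
    ring_nf
  have hnormSq : ∀ t,
      Complex.normSq (ψ t) = (charFun ((P.prod P).map fun p ↦ f p.1 - f p.2) t).re := fun t ↦ by
    rw [← charFun_map_mul_conj P hf, hψ_eq, Complex.mul_conj, Complex.ofReal_re]
  have hhalf : 0 < 1 / 2 + γ := by linarith
  have hA := integrable_re_charFun_mul_gaussian ((P.prod P).map fun p ↦ f p.1 - f p.2) hγ
  have hB := (integrable_re_charFun_mul_gaussian (P.map f) hhalf).const_mul 2
  simp_rw [sq_norm_sub_gaussian_mul_gaussian, hnormSq, hψ_eq]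
  rw [integral_add (f := fun t ↦ _ - _) (hA.sub hB) (integrable_exp_neg_mul_sq (by linarith)),
    integral_sub hA hB, integral_const_mul,
    integral_re_charFun_map_mul_gaussian _ (by fun_prop) hγ,
    integral_re_charFun_map_mul_gaussian _ hf hhalf, integral_gaussian]
  have hsqrt : √(π / (1 / 2 + γ)) = √(2 * π / (1 + 2 * γ)) := by
    congr 1
    field_simp
  have hstd : ∀ u c : ℝ, -(u / σ) ^ 2 / c = -u ^ 2 / (c * σ ^ 2) := fun u c ↦ by ring
  simp only [f, div_sub_div_same, sub_sub_sub_cancel_right, hstd, hsqrt,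
    show 4 * (1 / 2 + γ) = 2 + 4 * γ by ring]
  ring

/-- Let `X, X₁, X₂` be i.i.d. real random variables with common law `P`
(the i.i.d. structure being encoded by the measure `P` and its product), `μ ∈ ℝ`,
`σ > 0`, `ψ(t) = E[e^{it(X−μ)/σ}]`, `γ > 0`, and assume all expectations below are
finite.  Then
`∫ |ψ(t) − e^{−t²/2}|² e^{−γt²} dt = √(π/(1+γ))
  + √(π/γ) E[exp(−(X₁−X₂)²/(4γσ²))] − 2√(2π/(1+2γ)) E[exp(−(X₁−μ)²/((2+4γ)σ²))]`. -/
theorem bhep_population_limit (P : Measure ℝ) [IsProbabilityMeasure P]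
    (μ : ℝ) (σ : ℝ) (hσ : 0 < σ) (γ : ℝ) (hγ : 0 < γ)
    (ψ : ℝ → ℂ)
    (hψ : ∀ t : ℝ, ψ t = ∫ x, Complex.exp (Complex.I * t * ((x - μ) / σ)) ∂P)
    (hint1 : Integrable
      (fun p : ℝ × ℝ => Real.exp (-(p.1 - p.2) ^ 2 / (4 * γ * σ ^ 2))) (P.prod P))
    (hint2 : Integrable
      (fun x : ℝ => Real.exp (-(x - μ) ^ 2 / ((2 + 4 * γ) * σ ^ 2))) P) :
    ∫ t : ℝ, (‖ψ t - (Real.exp (-t ^ 2 / 2) : ℂ)‖) ^ 2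
        * Real.exp (-γ * t ^ 2) =
      Real.sqrt (π / (1 + γ))
        + Real.sqrt (π / γ) *
            ∫ p : ℝ × ℝ, Real.exp (-(p.1 - p.2) ^ 2 / (4 * γ * σ ^ 2)) ∂(P.prod P)
        - 2 * Real.sqrt (2 * π / (1 + 2 * γ)) *
            ∫ x : ℝ, Real.exp (-(x - μ) ^ 2 / ((2 + 4 * γ) * σ ^ 2)) ∂P :=
  bhep_population_limit_general P μ σ γ hγ ψ hψ
end

section
/- For every γ > 0, ∫_{−∞}^{∞} ( π t / sinh(π t) )² e^{-γ|t|} dt = (1/π) ( 2 ζ₂(1 + γ/(2π)) − (γ/π) ζ₃(1 + γ/(2π)) ), where ζ_s(x) = ∑_{k=0}^{∞} (k + x)^{-s} is the Hurwitz zeta function (here evaluated at s = 2 and s = 3), and the integrand at t = 0 is understood by continuity (πt/sinh(πt) → 1 as t → 0). -/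
/-!
For `t > 0`, expanding `sinh⁻² x = 4 ∑_{k ≥ 1} k e^{-2kx}` gives
`(πt / sinh πt)² e^{-γt} = 4π² ∑_{k ≥ 1} k t² e^{-(2πk + γ)t}`. Since all terms are nonnegative,
the series may be integrated termwise, and `∫₀^∞ t² e^{-at} dt = 2/a³` together with
`k / (k + c)³ = (k + c)⁻² - c (k + c)⁻³`, `c = γ/(2π)`, produces the Hurwitz zeta values.
The integrand is even, whence the factor `2` in front of the half-line integral.
-/

open MeasureTheory Real Set
open scoped Nat

lemma integral_pow_mul_exp_neg_mul_Ioi (n : ℕ) {r : ℝ} (hr : 0 < r) :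
    ∫ t in Ioi 0, t ^ n * exp (-(r * t)) = n ! / r ^ (n + 1) := by
  have h := integral_rpow_mul_exp_neg_mul_Ioi (a := n + 1) (by positivity) hr
  simp only [add_sub_cancel_right, rpow_natCast] at h
  rw [h, Gamma_nat_eq_factorial, one_div, inv_rpow hr.le, ← Nat.cast_succ, rpow_natCast]
  field_simp

lemma integrableOn_pow_mul_exp_neg_mul_Ioi (n : ℕ) {r : ℝ} (hr : 0 < r) :
    IntegrableOn (fun t => t ^ n * exp (-(r * t))) (Ioi 0) := by
  simpa [rpow_natCast, neg_mul] using
    integrableOn_rpow_mul_exp_neg_mul_rpow (s := n) (by linarith [n.cast_nonneg (α := ℝ)])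
      one_pos hr

lemma hasSum_inv_sinh_sq {x : ℝ} (hx : 0 < x) :
    HasSum (fun k : ℕ => 4 * (k + 1) * exp (-(2 * (k + 1) * x))) (sinh x ^ 2)⁻¹ := by
  have hr : ‖exp (-(2 * x))‖ < 1 := by
    rw [norm_of_nonneg (exp_pos _).le, exp_lt_one_iff]; linarith
  have hgeom := hasSum_coe_mul_geometric_of_norm_lt_one (𝕜 := ℝ) hr
  rw [← hasSum_nat_add_iff' 1] at hgeom
  have hsinh : (sinh x ^ 2)⁻¹ = 4 * (exp (-(2 * x)) / (1 - exp (-(2 * x))) ^ 2) := by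
    have : exp x ≠ 0 := (exp_pos x).ne'
    have : exp x ^ 2 - 1 ≠ 0 := by nlinarith [one_lt_exp_iff.mpr hx]
    have h2x : exp (-(2 * x)) = (exp x ^ 2)⁻¹ := by rw [exp_neg, ← exp_nat_mul]; norm_num
    rw [sinh_eq, exp_neg, h2x]
    field_simp
    ring
  rw [hsinh]
  refine ((hgeom.mul_left 4).congr_fun fun k => ?_).trans_eq (by simp)
  rw [← exp_nat_mul]
  push_cast
  ring_nf

lemma hasSum_mul_div_sinh_sq_mul_exp {c γ t : ℝ} (hct : 0 < c * t) :
    HasSum (fun k : ℕ => 4 * c ^ 2 * (k + 1) * (t ^ 2 * exp (-((2 * c * (k + 1) + γ) * t))))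
      ((c * t / sinh (c * t)) ^ 2 * exp (-γ * t)) := by
  rw [div_pow, div_eq_mul_inv]
  refine (((hasSum_inv_sinh_sq hct).mul_left ((c * t) ^ 2)).mul_right (exp (-γ * t))).congr_fun
    fun k => ?_
  rw [show -((2 * c * (k + 1) + γ) * t) = -(2 * (k + 1) * (c * t)) + -γ * t by ring, exp_add]
  ring

lemma mul_abs_div_sinh_mul_abs (c t : ℝ) : c * |t| / sinh (c * |t|) = c * t / sinh (c * t) := by
  rcases abs_choice t with h | h <;> simp [h, neg_div_neg_eq]

lemma summable_inv_nat_add_pow (b : ℝ) {s : ℕ} (hs : 1 < s) :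
    Summable fun n : ℕ => ((n + b) ^ s)⁻¹ := by
  refine summable_abs_iff.mp ?_
  simpa [abs_inv, abs_pow, one_div] using
    (Real.summable_one_div_nat_add_rpow b s).mpr (by exact_mod_cast hs)

lemma integral_sinh_series_term_Ioi {c γ : ℝ} (hc : 0 < c) (hγ : 0 ≤ γ) (k : ℕ) :
    ∫ t in Ioi 0, 4 * c ^ 2 * (k + 1) * (t ^ 2 * exp (-((2 * c * (k + 1) + γ) * t))) =
      1 / c * ((k + (1 + γ / (2 * c))) ^ 2)⁻¹
        - γ / (2 * c ^ 2) * ((k + (1 + γ / (2 * c))) ^ 3)⁻¹ := by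
  have hk : 0 < 2 * c * (k + 1) + γ := by positivity
  rw [integral_const_mul, integral_pow_mul_exp_neg_mul_Ioi 2 hk]
  field_simp
  ring

/-- For every `γ > 0`,
`∫ (πt/sinh(πt))² e^{−γ|t|} dt = (1/π)(2 ζ₂(1 + γ/(2π)) − (γ/π) ζ₃(1 + γ/(2π)))`,
where `ζ_s(x) = ∑_{k≥0} (k+x)^{−s}` and the integrand at `t = 0` is understood by
continuity. -/
theorem logistic_cf_squared_integral (γ : ℝ) (hγ : 0 < γ) :
    ∫ t : ℝ,
        (if t = 0 then (1 : ℝ) else π * t / Real.sinh (π * t)) ^ 2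
          * Real.exp (-γ * |t|) =
      (1 / π) * (2 * ∑' k : ℕ, (((k : ℝ) + (1 + γ / (2 * π))) ^ 2)⁻¹
        - (γ / π) * ∑' k : ℕ, (((k : ℝ) + (1 + γ / (2 * π))) ^ 3)⁻¹) := by
  set F : ℕ → ℝ → ℝ :=
    fun k t => 4 * π ^ 2 * (k + 1) * (t ^ 2 * exp (-((2 * π * (k + 1) + γ) * t)))
  have hF_int (k : ℕ) : IntegrableOn (F k) (Ioi 0) :=
    (integrableOn_pow_mul_exp_neg_mul_Ioi 2 (by positivity)).const_mul _
  have hF_nonneg (k : ℕ) (t : ℝ) : 0 ≤ F k t := by positivity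
  have hζ₂ := summable_inv_nat_add_pow (1 + γ / (2 * π)) one_lt_two
  have hζ₃ := summable_inv_nat_add_pow (1 + γ / (2 * π)) (s := 3) (by norm_num)
  have hF_sum : Summable fun k => ∫ t in Ioi 0, ‖F k t‖ := by
    simp only [norm_of_nonneg, hF_nonneg, F, integral_sinh_series_term_Ioi pi_pos hγ.le]
    exact (hζ₂.mul_left _).sub (hζ₃.mul_left _)
  have h_even := integral_comp_abs
    (f := fun t => (if t = 0 then (1 : ℝ) else π * t / sinh (π * t)) ^ 2 * exp (-γ * t))
  simp only [abs_eq_zero, mul_abs_div_sinh_mul_abs] at h_even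
  have h_series : EqOn (fun t => (if t = 0 then (1 : ℝ) else π * t / sinh (π * t)) ^ 2 *
      exp (-γ * t)) (fun t => ∑' k, F k t) (Ioi 0) := fun t ht => by
    dsimp only
    rw [if_neg (ne_of_gt ht)]
    exact (hasSum_mul_div_sinh_sq_mul_exp (mul_pos pi_pos ht)).tsum_eq.symm
  rw [h_even, setIntegral_congr_fun measurableSet_Ioi h_series,
    ← integral_tsum_of_summable_integral_norm hF_int hF_sum,
    tsum_congr (integral_sinh_series_term_Ioi pi_pos hγ.le),
    (hζ₂.mul_left _).tsum_sub (hζ₃.mul_left _), tsum_mul_left, tsum_mul_left]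
  field_simp
end

section
/- For every γ > 0 and x ∈ ℝ, ∫_{−∞}^{∞} cos(x t) ( π t / sinh(π t) ) e^{-γ|t|} dt = (1/π) ( S_γ^{(1)}(x) − (x²/(2π²)) S_γ^{(2)}(x) ), where S_γ^{(m)}(x) = ∑_{k=0}^{∞} [ (x/(2π))² + ((γ+π)/(2π) + k)² ]^{-m}, and the integrand at t = 0 is understood by continuity. -/
open MeasureTheory Real

/-!
For `t > 0`, the geometric series `πt / sinh(πt) = 2πt ∑ₖ e^{-(2k+1)πt}` writes the even
integrand as `∑ₖ 2πt e^{-aₖt} cos(xt)` with `aₖ = γ + (2k+1)π`. Each term integrates over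
`(0, ∞)` to `2π Re (aₖ - ix)⁻² = 2π (aₖ² - x²)/(aₖ² + x²)²`, and termwise integration is
legitimate because the `L¹` norms are at most `2π/aₖ²`, a summable sequence. Writing
`aₖ = 2πu`, `x = 2πy` with `u = (γ+π)/(2π) + k`, the partial fraction
`(u² - y²)/(u² + y²)² = 1/(u² + y²) - 2y²/(u² + y²)²` splits the result into `S¹` and `S²`.
-/

open Set Filter Topology

section LaplaceTransform

lemma integrableOn_Ioi_mul_exp_neg_mul {a : ℝ} (ha : 0 < a) :
    IntegrableOn (fun t : ℝ => t * exp (-a * t)) (Ioi 0) := by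
  simpa using integrableOn_rpow_mul_exp_neg_mul_rpow (s := 1) (p := 1) (by norm_num) one_pos ha

variable {c : ℂ}

lemma integrableOn_Ioi_ofReal_mul_cexp_neg_mul (hc : 0 < c.re) :
    IntegrableOn (fun t : ℝ => (t : ℂ) * Complex.exp (-c * t)) (Ioi 0) := by
  refine (integrableOn_Ioi_mul_exp_neg_mul hc).mono' (by fun_prop) ?_
  filter_upwards [ae_restrict_mem measurableSet_Ioi] with t ht
  simp [Complex.norm_exp, abs_of_pos (show (0:ℝ) < t from ht)]

lemma integral_Ioi_ofReal_mul_cexp_neg_mul (hc : 0 < c.re) :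
    ∫ t in Ioi (0 : ℝ), (t : ℂ) * Complex.exp (-c * t) = 1 / c ^ 2 := by
  have hc0 : c ≠ 0 := by rintro rfl; simp at hc
  have hexp : IntegrableOn (fun t : ℝ => Complex.exp (-c * t)) (Ioi 0) :=
    integrableOn_exp_mul_complex_Ioi (by simpa using hc) 0
  have hint := integrableOn_Ioi_ofReal_mul_cexp_neg_mul hc
  -- an antiderivative that is itself integrable, hence tends to `0`
  set F : ℝ → ℂ := fun t => -((t : ℂ) * Complex.exp (-c * t) / c + Complex.exp (-c * t) / c ^ 2)
  have hF : ∀ t : ℝ, HasDerivAt F ((t : ℂ) * Complex.exp (-c * t)) t := by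
    intro t
    have hid : HasDerivAt (fun s : ℝ => (s : ℂ)) 1 t := Complex.ofRealCLM.hasDerivAt
    have hE : HasDerivAt (fun s : ℝ => Complex.exp (-c * s)) (Complex.exp (-c * t) * (-c * 1)) t :=
      (hid.const_mul (-c)).cexp
    refine (((hid.mul hE).div_const c).add (hE.div_const (c ^ 2))).neg.congr_deriv ?_
    field_simp
    ring
  have hlim : Tendsto F atTop (𝓝 0) :=
    tendsto_zero_of_hasDerivAt_of_integrableOn_Ioi (a := 0) (fun t _ => hF t) hint
      ((hint.div_const c).add (hexp.div_const (c ^ 2))).neg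
  rw [integral_Ioi_of_hasDerivAt_of_tendsto' (fun t _ => hF t) hint hlim]
  simp [F]

end LaplaceTransform

section LaplaceCos

open Complex in
lemma re_ofReal_mul_cexp_neg_sub_mul_I (a x t : ℝ) :
    ((t : ℂ) * exp (-(a - x * I) * t)).re = t * Real.exp (-a * t) * Real.cos (x * t) := by
  rw [re_ofReal_mul, show -(a - x * I) * t = ((-a * t : ℝ) : ℂ) + ((x * t : ℝ) : ℂ) * I by
    push_cast; ring, exp_add_mul_I, ← ofReal_exp, ← ofReal_cos, ← ofReal_sin]
  simp only [add_re, ofReal_re, mul_re, I_re, I_im, ofReal_im]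
  ring

variable {a : ℝ}

lemma integrableOn_Ioi_mul_exp_neg_mul_mul_cos (ha : 0 < a) (x : ℝ) :
    IntegrableOn (fun t : ℝ => t * exp (-a * t) * cos (x * t)) (Ioi 0) := by
  have hc : 0 < (a - x * Complex.I : ℂ).re := by simpa using ha
  have h := (integrableOn_Ioi_ofReal_mul_cexp_neg_mul hc).re
  simp only [RCLike.re_to_complex, re_ofReal_mul_cexp_neg_sub_mul_I] at h
  exact h

lemma integral_Ioi_mul_exp_neg_mul_mul_cos (ha : 0 < a) (x : ℝ) :
    ∫ t in Ioi (0 : ℝ), t * exp (-a * t) * cos (x * t) = (a ^ 2 - x ^ 2) / (a ^ 2 + x ^ 2) ^ 2 := by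
  have hc : 0 < (a - x * Complex.I : ℂ).re := by simpa using ha
  simp_rw [← re_ofReal_mul_cexp_neg_sub_mul_I]
  have h := integral_re (integrableOn_Ioi_ofReal_mul_cexp_neg_mul hc)
  simp only [RCLike.re_to_complex] at h
  rw [h, integral_Ioi_ofReal_mul_cexp_neg_mul hc]
  have : a ^ 2 + x ^ 2 ≠ 0 := by positivity
  simp [Complex.normSq_apply, pow_two]
  field_simp

lemma integral_Ioi_mul_exp_neg_mul (ha : 0 < a) :
    ∫ t in Ioi (0 : ℝ), t * exp (-a * t) = 1 / a ^ 2 := by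
  have h := integral_Ioi_mul_exp_neg_mul_mul_cos ha 0
  simp only [zero_mul, cos_zero, mul_one, zero_pow two_ne_zero, sub_zero, add_zero] at h
  rw [h]
  field_simp

end LaplaceCos

lemma integral_eq_two_mul_integral_Ioi_of_even {f : ℝ → ℝ} (hf : ∀ t, f (-t) = f t) :
    ∫ t, f t = 2 * ∫ t in Ioi (0 : ℝ), f t := by
  rw [← integral_comp_abs]
  congr 1 with t
  rcases abs_choice t with h | h <;> rw [h]
  exact (hf t).symm

lemma summable_inv_nat_add_sq (c : ℝ) : Summable fun k : ℕ => ((k + c) ^ 2)⁻¹ := by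
  refine ((Real.summable_one_div_nat_add_rpow c 2).mpr one_lt_two).congr fun k => ?_
  rw [rpow_two, sq_abs, one_div]

lemma hasSum_exp_neg_odd_mul {y : ℝ} (hy : 0 < y) :
    HasSum (fun k : ℕ => exp (-((2 * k + 1) * y))) (2 * sinh y)⁻¹ := by
  have hq : exp (-(2 * y)) < 1 := exp_lt_one_iff.mpr (by linarith)
  have hsinh : (2 * sinh y)⁻¹ = exp (-y) * (1 - exp (-(2 * y)))⁻¹ := by
    have h1 : exp y - exp (-y) ≠ 0 := sub_ne_zero.mpr (exp_lt_exp.mpr (by linarith)).ne'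
    have he : 1 - exp (-(2 * y)) = (exp y - exp (-y)) * exp (-y) := by
      rw [sub_mul, ← exp_add, ← exp_add, add_neg_cancel, exp_zero]
      ring_nf
    rw [sinh_eq, he]
    field_simp
  rw [hsinh]
  refine ((hasSum_geometric_of_lt_one (exp_nonneg _) hq).mul_left (exp (-y))).congr_fun fun k => ?_
  rw [← exp_nat_mul, ← exp_add]
  ring_nf

section LogisticKernel

variable (γ x : ℝ)

lemma hasSum_cos_mul_div_sinh_mul_exp {t : ℝ} (ht : 0 < t) :
    HasSum (fun k : ℕ => 2 * π * (t * exp (-(γ + (2 * k + 1) * π) * t) * cos (x * t)))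
      (cos (x * t) * (π * t / sinh (π * t)) * exp (-γ * t)) := by
  have hsinh : sinh (π * t) ≠ 0 := (sinh_pos_iff.mpr (by positivity)).ne'
  rw [show cos (x * t) * (π * t / sinh (π * t)) * exp (-γ * t)
      = 2 * π * t * exp (-γ * t) * cos (x * t) * (2 * sinh (π * t))⁻¹ by field_simp]
  refine ((hasSum_exp_neg_odd_mul (by positivity)).mul_left _).congr_fun fun k => ?_
  rw [show -(γ + (2 * k + 1) * π) * t = -γ * t + -((2 * k + 1) * (π * t)) by ring, exp_add]
  ring

lemma hasSum_integral_Ioi_cos_mul_div_sinh_mul_exp (hγ : -π < γ) :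
    HasSum (fun k : ℕ => 2 * π * (((γ + (2 * k + 1) * π) ^ 2 - x ^ 2)
        / ((γ + (2 * k + 1) * π) ^ 2 + x ^ 2) ^ 2))
      (∫ t in Ioi (0 : ℝ), cos (x * t) * (π * t / sinh (π * t)) * exp (-γ * t)) := by
  set a : ℕ → ℝ := fun k => γ + (2 * k + 1) * π
  have ha : ∀ k, 0 < a k := fun k => by
    have : π ≤ (2 * k + 1) * π := by nlinarith [pi_pos, k.cast_nonneg (α := ℝ)]
    simp only [a]
    linarith
  set g : ℕ → ℝ → ℝ := fun k t => 2 * π * (t * exp (-a k * t) * cos (x * t))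
  have hg_int : ∀ k, IntegrableOn (g k) (Ioi 0) := fun k =>
    (integrableOn_Ioi_mul_exp_neg_mul_mul_cos (ha k) x).const_mul _
  have hg_norm : ∀ k, ∫ t in Ioi (0 : ℝ), ‖g k t‖ ≤ 2 * π / a k ^ 2 := fun k => calc
    ∫ t in Ioi (0 : ℝ), ‖g k t‖ ≤ ∫ t in Ioi (0 : ℝ), 2 * π * (t * exp (-a k * t)) := by
      refine setIntegral_mono_on (hg_int k).norm
        ((integrableOn_Ioi_mul_exp_neg_mul (ha k)).const_mul _) measurableSet_Ioi fun t ht => ?_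
      have ht : 0 < t := ht
      simp only [g, Real.norm_eq_abs, abs_mul, abs_of_pos ht, abs_exp, abs_of_pos two_pi_pos]
      exact mul_le_mul_of_nonneg_left (mul_le_of_le_one_right (by positivity) (abs_cos_le_one _))
        (by positivity)
    _ = 2 * π / a k ^ 2 := by
      rw [integral_const_mul, integral_Ioi_mul_exp_neg_mul (ha k), mul_one_div]
  have hsum : Summable fun k => 2 * π / a k ^ 2 := by
    refine ((summable_inv_nat_add_sq ((γ + π) / (2 * π))).mul_left (2 * π)⁻¹).congr fun k => ?_
    simp only [a]
    field_simp
    ring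
  have h := hasSum_integral_of_summable_integral_norm hg_int
    (hsum.of_nonneg_of_le (fun k => integral_nonneg fun _ => norm_nonneg _) hg_norm)
  rw [setIntegral_congr_fun measurableSet_Ioi
    fun t ht => (hasSum_cos_mul_div_sinh_mul_exp γ x ht).tsum_eq.symm]
  refine h.congr_fun fun k => ?_
  rw [integral_const_mul, integral_Ioi_mul_exp_neg_mul_mul_cos (ha k)]

end LogisticKernel

lemma hasSum_sq_sub_sq_div_sq_add_sq_sq (y : ℝ) {c : ℝ} (hc : 0 < c) :
    HasSum (fun k : ℕ => ((c + k) ^ 2 - y ^ 2) / (y ^ 2 + (c + k) ^ 2) ^ 2)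
      (∑' k : ℕ, (y ^ 2 + (c + k) ^ 2)⁻¹
        - 2 * y ^ 2 * ∑' k : ℕ, ((y ^ 2 + (c + k) ^ 2) ^ 2)⁻¹) := by
  have hc_le : ∀ k : ℕ, c ≤ c + k := fun k => le_add_of_nonneg_right k.cast_nonneg
  have h1 : Summable fun k : ℕ => (y ^ 2 + (c + k) ^ 2)⁻¹ := by
    refine (summable_inv_nat_add_sq c).of_nonneg_of_le (fun k => by positivity) fun k => ?_
    rw [add_comm (k : ℝ)]
    gcongr
    exact le_add_of_nonneg_left (sq_nonneg y)
  have h2 : Summable fun k : ℕ => ((y ^ 2 + (c + k) ^ 2) ^ 2)⁻¹ := by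
    refine (h1.mul_left (c ^ 2)⁻¹).of_nonneg_of_le (fun k => by positivity) fun k => ?_
    rw [sq (y ^ 2 + _), mul_inv]
    gcongr
    nlinarith [hc_le k, sq_nonneg y]
  refine (h1.hasSum.sub (h2.hasSum.mul_left (2 * y ^ 2))).congr_fun fun k => ?_
  have : y ^ 2 + (c + k) ^ 2 ≠ 0 := by nlinarith [hc_le k, sq_nonneg y]
  field_simp
  ring

/-- For every `γ > 0` and `x ∈ ℝ`,
`∫ cos(xt) (πt/sinh(πt)) e^{−γ|t|} dt = (1/π)(S¹_γ(x) − (x²/(2π²)) S²_γ(x))`,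
where `S^m_γ(x) = ∑_{k≥0} [(x/(2π))² + ((γ+π)/(2π) + k)²]^{−m}` and the integrand
at `t = 0` is understood by continuity. -/
theorem logistic_cf_cos_integral (γ : ℝ) (hγ : 0 < γ) (x : ℝ) :
    ∫ t : ℝ,
        Real.cos (x * t) * (if t = 0 then (1 : ℝ) else π * t / Real.sinh (π * t))
          * Real.exp (-γ * |t|) =
      (1 / π) *
        ((∑' k : ℕ, ((x / (2 * π)) ^ 2 + ((γ + π) / (2 * π) + (k : ℝ)) ^ 2)⁻¹)
          - x ^ 2 / (2 * π ^ 2) *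
            ∑' k : ℕ, (((x / (2 * π)) ^ 2 + ((γ + π) / (2 * π) + (k : ℝ)) ^ 2) ^ 2)⁻¹) := by
  have hπ := pi_pos
  have hc : 0 < (γ + π) / (2 * π) := by positivity
  have heven : ∀ t : ℝ, cos (x * -t) * (if -t = 0 then (1 : ℝ) else π * -t / sinh (π * -t))
      * exp (-γ * |-t|) = cos (x * t) * (if t = 0 then (1 : ℝ) else π * t / sinh (π * t))
      * exp (-γ * |t|) := fun t => by
    simp [mul_neg, sinh_neg, neg_div_neg_eq, cos_neg, abs_neg]
  have hIoi : ∀ t ∈ Ioi (0 : ℝ), cos (x * t) * (if t = 0 then (1 : ℝ) else π * t / sinh (π * t))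
      * exp (-γ * |t|) = cos (x * t) * (π * t / sinh (π * t)) * exp (-γ * t) := fun t ht => by
    rw [if_neg (ne_of_gt ht), abs_of_pos ht]
  rw [integral_eq_two_mul_integral_Ioi_of_even heven, setIntegral_congr_fun measurableSet_Ioi hIoi,
    ← (hasSum_integral_Ioi_cos_mul_div_sinh_mul_exp γ x (by linarith)).tsum_eq,
    show x ^ 2 / (2 * π ^ 2) = 2 * (x / (2 * π)) ^ 2 by field_simp,
    ← (hasSum_sq_sub_sq_div_sq_add_sq_sq (x / (2 * π)) hc).tsum_eq,
    ← tsum_mul_left, ← tsum_mul_left]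
  refine tsum_congr fun k => ?_
  rw [show γ + (2 * k + 1) * π = 2 * π * ((γ + π) / (2 * π) + k) by field_simp; ring]
  have : 0 < (γ + π) / (2 * π) + k := by positivity
  field_simp
  ring
end

section
/- Let X, X₁, X₂, X₃, X₄ be independent identically distributed real random variables, let σ > 0, let ψ(t) = E[e^{i t X/σ}], and let γ > 0. Then ∫_{−∞}^{∞} ( |ψ(t)|² − Re ψ(t) )² e^{-γ|t|} dt = γ E[ 1/(γ² + ((X₁−X₂)/σ)²) + 1/(γ² + ((X₁+X₂)/σ)²) ] − 2γ E[ 1/(γ² + ((X₁−X₂−X₃)/σ)²) + 1/(γ² + ((X₁−X₂+X₃)/σ)²) ] + γ E[ 1/(γ² + ((X₁−X₂−X₃+X₄)/σ)²) + 1/(γ² + ((X₁−X₂+X₃−X₄)/σ)²) ]. -/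
/-!
Expanding the square, `(|ψ|² - Re ψ)² = (Re ψ)² - 2 |ψ|² Re ψ + |ψ|⁴`, and since `ψ(-t) = conj ψ(t)`
each of the three terms is, by independence, the real part of `E exp(i t S / σ)` for two signed
sums `S` of `X₁, …, X₄`, e.g. `2 (Re ψ)² = Re (ψ ψ̄) + Re (ψ ψ)`. The integrand in `(t, X)` is
bounded by a multiple of `e^{-γ|t|}`, so Fubini applies, and each `cos (a t)` integrates against
`e^{-γ|t|}` to `2γ / (γ² + a²)`.
-/

open MeasureTheory Real Set Function

lemma integrable_exp_neg_mul_abs {γ : ℝ} (hγ : 0 < γ) :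
    Integrable (fun t : ℝ => exp (-γ * |t|)) := by
  rw [← integrableOn_univ, ← Iic_union_Ioi (a := (0 : ℝ)), integrableOn_union]
  constructor
  · refine (integrableOn_exp_mul_Iic hγ 0).congr_fun (fun t ht => ?_) measurableSet_Iic
    simp [abs_of_nonpos (show t ≤ 0 from ht)]
  · refine (integrableOn_exp_mul_Ioi (neg_lt_zero.2 hγ) 0).congr_fun (fun t ht => ?_)
      measurableSet_Ioi
    simp [abs_of_pos (show 0 < t from ht)]

lemma setIntegral_Ioi_cos_mul_exp_neg_mul {γ : ℝ} (hγ : 0 < γ) (a : ℝ) :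
    ∫ t in Ioi 0, cos (a * t) * exp (-γ * t) = γ * (γ ^ 2 + a ^ 2)⁻¹ := by
  have hre : (-γ + a * Complex.I).re < 0 := by simpa using hγ
  have h := integral_re (integrableOn_exp_mul_complex_Ioi hre 0)
  rw [integral_exp_mul_complex_Ioi hre 0] at h
  convert h using 1
  · refine setIntegral_congr_fun measurableSet_Ioi fun t _ => ?_
    simp [Complex.exp_re, mul_comm]
  · simp [Complex.div_re, Complex.normSq_apply]
    field_simp

lemma integral_cos_mul_mul_exp_neg_mul_abs {γ : ℝ} (hγ : 0 < γ) (a : ℝ) :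
    ∫ t, cos (a * t) * exp (-γ * |t|) = 2 * γ * (γ ^ 2 + a ^ 2)⁻¹ := by
  have heven : (fun t => cos (a * t) * exp (-γ * |t|))
      = fun t => (fun s => cos (a * s) * exp (-γ * s)) |t| := by
    ext t
    rcases abs_choice t with h | h <;> simp [h]
  rw [heven, integral_comp_abs (f := fun s => cos (a * s) * exp (-γ * s)),
    setIntegral_Ioi_cos_mul_exp_neg_mul hγ]
  ring

section BoundedKernel

variable {E F : Type*} [MeasurableSpace E] [MeasurableSpace F] {μ : Measure E} {ν : Measure F}
  [IsFiniteMeasure μ] {f : E → F → ℝ} {w : F → ℝ} {C : ℝ}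

lemma integrable_prod_mul_of_bounded (hf : AEStronglyMeasurable (uncurry f) (μ.prod ν))
    (hC : ∀ x t, |f x t| ≤ C) (hw : Integrable w ν) :
    Integrable (fun p : E × F => f p.1 p.2 * w p.2) (μ.prod ν) := by
  have hw' : Integrable (fun p : E × F => w p.2) (μ.prod ν) := by
    simpa using (integrable_const (1 : ℝ)).mul_prod hw
  exact hw'.bdd_mul hf (.of_forall fun p => hC p.1 p.2)

lemma integrable_integral_mul_of_bounded [SFinite ν]
    (hf : AEStronglyMeasurable (uncurry f) (μ.prod ν))
    (hC : ∀ x t, |f x t| ≤ C) (hw : Integrable w ν) :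
    Integrable (fun t => (∫ x, f x t ∂μ) * w t) ν := by
  simpa only [integral_mul_const] using
    (integrable_prod_mul_of_bounded hf hC hw).integral_prod_right

lemma integral_integral_mul_swap_of_bounded [SFinite ν]
    (hf : AEStronglyMeasurable (uncurry f) (μ.prod ν))
    (hC : ∀ x t, |f x t| ≤ C) (hw : Integrable w ν) :
    ∫ t, (∫ x, f x t ∂μ) * w t ∂ν = ∫ x, ∫ t, f x t * w t ∂ν ∂μ := by
  simp_rw [← integral_mul_const]
  exact (integral_integral_swap (integrable_prod_mul_of_bounded hf hC hw)).symm

end BoundedKernel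

lemma abs_cos_add_cos_le_two (x y : ℝ) : |cos x + cos y| ≤ 2 :=
  (abs_add_le _ _).trans (by linarith [abs_cos_le_one x, abs_cos_le_one y])

section CosinePair

variable {E : Type*} [MeasurableSpace E] {μ : Measure E} [IsFiniteMeasure μ] {a b : E → ℝ}
  {γ : ℝ}

lemma integrable_integral_cos_add_cos_mul_exp_neg_abs (hγ : 0 < γ) (ha : Measurable a)
    (hb : Measurable b) :
    Integrable (fun t => (∫ x, cos (a x * t) + cos (b x * t) ∂μ) * exp (-γ * |t|)) :=
  integrable_integral_mul_of_bounded (by fun_prop) (fun _ _ => abs_cos_add_cos_le_two _ _)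
    (integrable_exp_neg_mul_abs hγ)

lemma integral_integral_cos_add_cos_mul_exp_neg_abs (hγ : 0 < γ) (ha : Measurable a)
    (hb : Measurable b) :
    ∫ t, (∫ x, cos (a x * t) + cos (b x * t) ∂μ) * exp (-γ * |t|)
      = 2 * γ * ∫ x, (γ ^ 2 + a x ^ 2)⁻¹ + (γ ^ 2 + b x ^ 2)⁻¹ ∂μ := by
  rw [integral_integral_mul_swap_of_bounded (by fun_prop)
    (fun _ _ => abs_cos_add_cos_le_two _ _) (integrable_exp_neg_mul_abs hγ), ← integral_const_mul]
  refine integral_congr_ae (.of_forall fun x => ?_)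
  have hcos : ∀ c : ℝ, Integrable fun t => cos (c * t) * exp (-γ * |t|) := fun c =>
    (integrable_exp_neg_mul_abs hγ).bdd_mul (by fun_prop)
      (.of_forall fun t => (abs_cos_le_one _))
  simp only [add_mul]
  rw [integral_add (hcos _) (hcos _), integral_cos_mul_mul_exp_neg_mul_abs hγ,
    integral_cos_mul_mul_exp_neg_mul_abs hγ]
  ring

end CosinePair

lemma integral_cos_mul_pi_eq_re_prod_charFun {ι : Type*} [Fintype ι] (μ : ι → Measure ℝ)
    [∀ i, IsFiniteMeasure (μ i)] (c : ι → ℝ) (s : ℝ) :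
    ∫ v, cos ((∑ i, c i * v i) * s) ∂(Measure.pi μ) = (∏ i, charFun (μ i) (c i * s)).re := by
  have hexp : ∀ v : ι → ℝ, Complex.exp (↑((∑ i, c i * v i) * s) * Complex.I)
      = ∏ i, Complex.exp (↑(c i * s) * ↑(v i) * Complex.I) := fun v => by
    rw [← Complex.exp_sum, Finset.sum_mul, Complex.ofReal_sum, Finset.sum_mul]
    exact congrArg _ (Finset.sum_congr rfl fun i _ => by push_cast; ring)
  have hint : Integrable (fun v : ι → ℝ => Complex.exp (↑((∑ i, c i * v i) * s) * Complex.I))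
      (Measure.pi μ) :=
    .of_bound (Continuous.aestronglyMeasurable (by fun_prop)) 1
      (.of_forall fun v => (Complex.norm_exp_ofReal_mul_I _).le)
  simp_rw [charFun_apply_real, ← integral_fintype_prod_eq_prod, ← hexp,
    ← Complex.exp_ofReal_mul_I_re]
  exact integral_re hint

lemma integral_cos_add_cos_pi_eq_re_prod_charFun {ι : Type*} [Fintype ι] (μ : ι → Measure ℝ)
    [∀ i, IsFiniteMeasure (μ i)] (L M : (ι → ℝ) → ℝ) (c d : ι → ℝ)
    (hL : L = fun v => ∑ i, c i * v i) (hM : M = fun v => ∑ i, d i * v i) (s : ℝ) :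
    ∫ v, cos (L v * s) + cos (M v * s) ∂(Measure.pi μ)
      = (∏ i, charFun (μ i) (c i * s)).re + (∏ i, charFun (μ i) (d i * s)).re := by
  subst hL hM
  have hcos : ∀ e : ι → ℝ, Integrable (fun v => cos ((∑ i, e i * v i) * s)) (Measure.pi μ) :=
    fun e => .of_bound (Continuous.aestronglyMeasurable (by fun_prop)) 1
      (.of_forall fun _ => abs_cos_le_one _)
  rw [integral_add (hcos c) (hcos d), integral_cos_mul_pi_eq_re_prod_charFun,
    integral_cos_mul_pi_eq_re_prod_charFun]

section IidQuadruple

variable (P : Measure ℝ) [IsProbabilityMeasure P] (σ t : ℝ)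

lemma integral_pi_cos_sub_add_cos_add :
    ∫ v : Fin 4 → ℝ, cos ((v 0 - v 1) / σ * t) + cos ((v 0 + v 1) / σ * t)
      ∂(Measure.pi fun _ => P) = 2 * (charFun P (σ⁻¹ * t)).re ^ 2 := by
  rw [integral_cos_add_cos_pi_eq_re_prod_charFun _ _ _ ![σ⁻¹, -σ⁻¹, 0, 0] ![σ⁻¹, σ⁻¹, 0, 0]
    (by ext; simp [Fin.sum_univ_four]; ring) (by ext; simp [Fin.sum_univ_four]; ring)]
  simp [Fin.prod_univ_four, charFun_neg]
  ring

lemma integral_pi_cos_sub_sub_add_cos_sub_add :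
    ∫ v : Fin 4 → ℝ, cos ((v 0 - v 1 - v 2) / σ * t) + cos ((v 0 - v 1 + v 2) / σ * t)
      ∂(Measure.pi fun _ => P) = 2 * ‖charFun P (σ⁻¹ * t)‖ ^ 2 * (charFun P (σ⁻¹ * t)).re := by
  rw [integral_cos_add_cos_pi_eq_re_prod_charFun _ _ _ ![σ⁻¹, -σ⁻¹, -σ⁻¹, 0]
    ![σ⁻¹, -σ⁻¹, σ⁻¹, 0] (by ext; simp [Fin.sum_univ_four]; ring)
    (by ext; simp [Fin.sum_univ_four]; ring)]
  simp [Fin.prod_univ_four, charFun_neg, Complex.sq_norm, Complex.normSq_apply]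
  ring

lemma integral_pi_cos_sub_sub_add_add_cos_sub_add_sub :
    ∫ v : Fin 4 → ℝ,
      cos ((v 0 - v 1 - v 2 + v 3) / σ * t) + cos ((v 0 - v 1 + v 2 - v 3) / σ * t)
      ∂(Measure.pi fun _ => P) = 2 * ‖charFun P (σ⁻¹ * t)‖ ^ 4 := by
  rw [integral_cos_add_cos_pi_eq_re_prod_charFun _ _ _ ![σ⁻¹, -σ⁻¹, -σ⁻¹, σ⁻¹]
    ![σ⁻¹, -σ⁻¹, σ⁻¹, -σ⁻¹] (by ext; simp [Fin.sum_univ_four]; ring)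
    (by ext; simp [Fin.sum_univ_four]; ring)]
  rw [show ∀ r : ℝ, r ^ 4 = (r ^ 2) ^ 2 by intro; ring, Complex.sq_norm, Complex.normSq_apply]
  simp [Fin.prod_univ_four, charFun_neg]
  ring

end IidQuadruple

theorem exp_test_population_limit_w1_general (P : Measure ℝ) [IsProbabilityMeasure P]
    (σ : ℝ) (γ : ℝ) (hγ : 0 < γ)
    (ψ : ℝ → ℂ)
    (hψ : ∀ t : ℝ, ψ t = ∫ x, Complex.exp (Complex.I * t * (x / σ)) ∂P) :
    ∫ t : ℝ, ((‖ψ t‖) ^ 2 - (ψ t).re) ^ 2 * Real.exp (-γ * |t|) =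
      γ * (∫ v : Fin 4 → ℝ,
            ((γ ^ 2 + ((v 0 - v 1) / σ) ^ 2)⁻¹ + (γ ^ 2 + ((v 0 + v 1) / σ) ^ 2)⁻¹)
          ∂(Measure.pi fun _ => P))
      - 2 * γ * (∫ v : Fin 4 → ℝ,
            ((γ ^ 2 + ((v 0 - v 1 - v 2) / σ) ^ 2)⁻¹
              + (γ ^ 2 + ((v 0 - v 1 + v 2) / σ) ^ 2)⁻¹)
          ∂(Measure.pi fun _ => P))
      + γ * (∫ v : Fin 4 → ℝ,
            ((γ ^ 2 + ((v 0 - v 1 - v 2 + v 3) / σ) ^ 2)⁻¹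
              + (γ ^ 2 + ((v 0 - v 1 + v 2 - v 3) / σ) ^ 2)⁻¹)
          ∂(Measure.pi fun _ => P)) := by
  obtain rfl : ψ = fun t => charFun P (σ⁻¹ * t) := funext fun t => by
    rw [hψ, charFun_apply_real]
    congr 1 with x
    congr 1
    push_cast
    ring
  have hpair : ∀ {a b : (Fin 4 → ℝ) → ℝ}, Measurable a → Measurable b →
      Integrable fun t => (∫ v, cos (a v * t) + cos (b v * t) ∂(Measure.pi fun _ => P)) *
        exp (-γ * |t|) :=
    integrable_integral_cos_add_cos_mul_exp_neg_abs hγ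
  have hexpand : ∀ z : ℂ, (‖z‖ ^ 2 - z.re) ^ 2
      = 1 / 2 * (2 * z.re ^ 2) - 2 * ‖z‖ ^ 2 * z.re + 1 / 2 * (2 * ‖z‖ ^ 4) := fun z => by ring
  simp_rw [hexpand, ← integral_pi_cos_sub_add_cos_add P σ,
    ← integral_pi_cos_sub_sub_add_cos_sub_add P σ,
    ← integral_pi_cos_sub_sub_add_add_cos_sub_add_sub P σ, add_mul, sub_mul, mul_assoc]
  rw [integral_add, integral_sub, integral_const_mul, integral_const_mul,
    integral_integral_cos_add_cos_mul_exp_neg_abs hγ ?_ ?_,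
    integral_integral_cos_add_cos_mul_exp_neg_abs hγ ?_ ?_,
    integral_integral_cos_add_cos_mul_exp_neg_abs hγ ?_ ?_]
  · ring
  -- `fun_prop` closes the integrability side goals using `hpair`
  all_goals fun_prop

/-- Let `X, X₁, X₂, X₃, X₄` be i.i.d. real random variables with common
law `P` (the i.i.d. structure being encoded by the measure `P` and its fourfold
product), `σ > 0`, `ψ(t) = E[e^{itX/σ}]`, `γ > 0`.  Then
`∫ (|ψ(t)|² − Re ψ(t))² e^{−γ|t|} dt` equals the stated combination of expectations
of `1/(γ² + (·/σ)²)` evaluated at the signed sums of `X₁,…,X₄`. -/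
theorem exp_test_population_limit_w1 (P : Measure ℝ) [IsProbabilityMeasure P]
    (σ : ℝ) (hσ : 0 < σ) (γ : ℝ) (hγ : 0 < γ)
    (ψ : ℝ → ℂ)
    (hψ : ∀ t : ℝ, ψ t = ∫ x, Complex.exp (Complex.I * t * (x / σ)) ∂P) :
    ∫ t : ℝ, ((‖ψ t‖) ^ 2 - (ψ t).re) ^ 2 * Real.exp (-γ * |t|) =
      γ * (∫ v : Fin 4 → ℝ,
            ((γ ^ 2 + ((v 0 - v 1) / σ) ^ 2)⁻¹ + (γ ^ 2 + ((v 0 + v 1) / σ) ^ 2)⁻¹)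
          ∂(Measure.pi fun _ => P))
      - 2 * γ * (∫ v : Fin 4 → ℝ,
            ((γ ^ 2 + ((v 0 - v 1 - v 2) / σ) ^ 2)⁻¹
              + (γ ^ 2 + ((v 0 - v 1 + v 2) / σ) ^ 2)⁻¹)
          ∂(Measure.pi fun _ => P))
      + γ * (∫ v : Fin 4 → ℝ,
            ((γ ^ 2 + ((v 0 - v 1 - v 2 + v 3) / σ) ^ 2)⁻¹
              + (γ ^ 2 + ((v 0 - v 1 + v 2 - v 3) / σ) ^ 2)⁻¹)
          ∂(Measure.pi fun _ => P)) :=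
  exp_test_population_limit_w1_general P σ γ hγ ψ hψ
end

section
/- Let X, X₁, X₂, X₃, X₄ be independent identically distributed real random variables, let σ > 0, let ψ(t) = E[e^{i t X/σ}], and let γ > 0. Then ∫_{−∞}^{∞} ( |ψ(t)|² − Re ψ(t) )² e^{-γ t²} dt = (1/2)√(π/γ) E[ exp( −((X₁−X₂)/σ)²/(4γ) ) + exp( −((X₁+X₂)/σ)²/(4γ) ) ] − √(π/γ) E[ exp( −((X₁−X₂−X₃)/σ)²/(4γ) ) + exp( −((X₁−X₂+X₃)/σ)²/(4γ) ) ] + (1/2)√(π/γ) E[ exp( −((X₁−X₂−X₃+X₄)/σ)²/(4γ) ) + exp( −((X₁−X₂+X₃−X₄)/σ)²/(4γ) ) ]. -/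
/-!
Write `Y = X / σ`. Then `Re ψ(t) = E cos(tY)` and, by independence, `|ψ(t)|² = E cos(t(Y₁ - Y₂))`,
so the integrand is `(E cos(tA) - E cos(tB))² e^{-γt²}` with `A = Y₁ - Y₂`, `B = Y₁`. Expanding the
square with independent copies, every term has the form `E cos(tU) · E cos(tV)` with `U`, `V`
independent, which equals `½ E[cos(t(U - V)) + cos(t(U + V))]`. Fubini and the Gaussian Fourier
transform `∫ cos(ut) e^{-γt²} dt = √(π/γ) e^{-u²/(4γ)}` then turn the three terms into the three
expectations of Gaussian kernels.
-/

open MeasureTheory Real ProbabilityTheory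

section CharFun
variable {α : Type*} [MeasurableSpace α] {μ : Measure α} [IsFiniteMeasure μ] {f : α → ℝ}

lemma Complex.I_mul_ofReal_mul_ofReal (t s : ℝ) :
    Complex.I * t * s = ((t * s : ℝ) : ℂ) * Complex.I := by
  push_cast; ring

lemma integrable_cexp_I_mul (hf : Measurable f) (t : ℝ) :
    Integrable (fun x => Complex.exp (Complex.I * t * f x)) μ :=
  .of_bound (by fun_prop) 1 (ae_of_all _ fun x => by
    rw [Complex.I_mul_ofReal_mul_ofReal, Complex.norm_exp_ofReal_mul_I])

lemma re_integral_cexp_I_mul (hf : Measurable f) (t : ℝ) :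
    (∫ x, Complex.exp (Complex.I * t * f x) ∂μ).re = ∫ x, cos (t * f x) ∂μ := by
  rw [← RCLike.re_eq_complex_re, ← integral_re (integrable_cexp_I_mul hf t)]
  congr 1 with x
  rw [RCLike.re_eq_complex_re, Complex.I_mul_ofReal_mul_ofReal, Complex.exp_ofReal_mul_I_re]

lemma im_integral_cexp_I_mul (hf : Measurable f) (t : ℝ) :
    (∫ x, Complex.exp (Complex.I * t * f x) ∂μ).im = ∫ x, sin (t * f x) ∂μ := by
  rw [← RCLike.im_eq_complex_im, ← integral_im (integrable_cexp_I_mul hf t)]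
  congr 1 with x
  rw [RCLike.im_eq_complex_im, Complex.I_mul_ofReal_mul_ofReal, Complex.exp_ofReal_mul_I_im]

end CharFun

section GaussianCosine
variable {γ : ℝ}

lemma integrable_cos_mul_mul_exp_neg_mul_sq (hγ : 0 < γ) (u : ℝ) :
    Integrable fun t => cos (t * u) * exp (-γ * t ^ 2) :=
  (integrable_exp_neg_mul_sq hγ).bdd_mul (by fun_prop) (ae_of_all _ fun _ => abs_cos_le_one _)

lemma integral_cos_mul_mul_exp_neg_mul_sq (hγ : 0 < γ) (u : ℝ) :
    ∫ t, cos (t * u) * exp (-γ * t ^ 2) = √(π / γ) * exp (-u ^ 2 / (4 * γ)) := by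
  have hγ' : (-(γ : ℂ)).re < 0 := by simpa using hγ
  have hre (t : ℝ) : (Complex.exp (-γ * t ^ 2 + u * Complex.I * t + 0)).re =
      cos (t * u) * exp (-γ * t ^ 2) := by
    rw [show (-γ * t ^ 2 + u * Complex.I * t + 0 : ℂ) =
        ((-γ * t ^ 2 : ℝ) : ℂ) + ((t * u : ℝ) : ℂ) * Complex.I by push_cast; ring,
      Complex.exp_add, ← Complex.ofReal_exp, Complex.re_ofReal_mul, Complex.exp_ofReal_mul_I_re,
      mul_comm]
  have hsqrt : ((π : ℂ) / -(-(γ : ℂ))) ^ (1 / 2 : ℂ) = ((√(π / γ) : ℝ) : ℂ) := by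
    rw [neg_neg, ← Complex.ofReal_div, Real.sqrt_eq_rpow, Complex.ofReal_cpow (by positivity)]
    norm_num
  have hexp : 0 - (u * Complex.I) ^ 2 / (4 * -(γ : ℂ)) = ((-u ^ 2 / (4 * γ) : ℝ) : ℂ) := by
    push_cast; rw [mul_pow, Complex.I_sq]; ring
  have h := congrArg Complex.re (integral_cexp_quadratic hγ' (u * Complex.I) 0)
  rw [hsqrt, hexp, ← Complex.ofReal_exp, ← Complex.ofReal_mul, Complex.ofReal_re,
    ← RCLike.re_eq_complex_re, ← integral_re (integrable_cexp_quadratic' hγ' _ 0)] at h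
  simpa only [RCLike.re_eq_complex_re, hre] using h

lemma integral_cos_mul_cos_mul_exp_neg_mul_sq (hγ : 0 < γ) (u v : ℝ) :
    ∫ t, cos (t * u) * cos (t * v) * exp (-γ * t ^ 2) =
      √(π / γ) / 2 * (exp (-(u - v) ^ 2 / (4 * γ)) + exp (-(u + v) ^ 2 / (4 * γ))) := by
  have hprod (t : ℝ) : cos (t * u) * cos (t * v) * exp (-γ * t ^ 2) =
      (cos (t * (u - v)) * exp (-γ * t ^ 2) + cos (t * (u + v)) * exp (-γ * t ^ 2)) / 2 := by
    rw [mul_sub, mul_add, cos_sub, cos_add]; ring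
  simp only [hprod]
  rw [integral_div, integral_add (integrable_cos_mul_mul_exp_neg_mul_sq hγ _)
    (integrable_cos_mul_mul_exp_neg_mul_sq hγ _), integral_cos_mul_mul_exp_neg_mul_sq hγ,
    integral_cos_mul_mul_exp_neg_mul_sq hγ]
  ring

lemma integrable_cos_mul_cos_mul_exp_neg_mul_sq_prod {Ω : Type*} [MeasurableSpace Ω]
    {μ : Measure Ω} [IsFiniteMeasure μ] {U V : Ω → ℝ} (hγ : 0 < γ)
    (hU : Measurable U) (hV : Measurable V) :
    Integrable (fun p : ℝ × Ω => cos (p.1 * U p.2) * cos (p.1 * V p.2) * exp (-γ * p.1 ^ 2))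
      (volume.prod μ) := by
  refine ((integrable_exp_neg_mul_sq hγ).mul_prod (integrable_const (1 : ℝ))).mono' (by fun_prop)
    (ae_of_all _ fun p => ?_)
  rw [norm_mul, norm_mul, norm_of_nonneg (exp_pos _).le, mul_one]
  exact mul_le_of_le_one_left (exp_pos _).le
    (mul_le_one₀ (abs_cos_le_one _) (norm_nonneg _) (abs_cos_le_one _))

end GaussianCosine

namespace ProbabilityTheory.IndepFun

variable {Ω : Type*} [MeasurableSpace Ω] {μ : Measure Ω} {U V : Ω → ℝ} {γ : ℝ}

lemma integral_cos_mul_integral_cos (hUV : IndepFun U V μ) (hU : Measurable U)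
    (hV : Measurable V) (t : ℝ) :
    (∫ ω, cos (t * U ω) ∂μ) * (∫ ω, cos (t * V ω) ∂μ) = ∫ ω, cos (t * U ω) * cos (t * V ω) ∂μ :=
  ((hUV.comp (by fun_prop : Measurable fun x => cos (t * x))
    (by fun_prop : Measurable fun x => cos (t * x))).integral_fun_mul_eq_mul_integral
    (by fun_prop) (by fun_prop)).symm

lemma integral_sin_mul_integral_sin (hUV : IndepFun U V μ) (hU : Measurable U)
    (hV : Measurable V) (t : ℝ) :
    (∫ ω, sin (t * U ω) ∂μ) * (∫ ω, sin (t * V ω) ∂μ) = ∫ ω, sin (t * U ω) * sin (t * V ω) ∂μ :=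
  ((hUV.comp (by fun_prop : Measurable fun x => sin (t * x))
    (by fun_prop : Measurable fun x => sin (t * x))).integral_fun_mul_eq_mul_integral
    (by fun_prop) (by fun_prop)).symm

lemma integral_cos_mul_integral_cos_mul_exp (hUV : IndepFun U V μ) (hU : Measurable U)
    (hV : Measurable V) (t : ℝ) :
    (∫ ω, cos (t * U ω) ∂μ) * (∫ ω, cos (t * V ω) ∂μ) * exp (-γ * t ^ 2) =
      ∫ ω, cos (t * U ω) * cos (t * V ω) * exp (-γ * t ^ 2) ∂μ := by
  rw [hUV.integral_cos_mul_integral_cos hU hV, integral_mul_const]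

variable [IsFiniteMeasure μ]

lemma integral_cos_mul_sub (hUV : IndepFun U V μ) (hU : Measurable U)
    (hV : Measurable V) (t : ℝ) :
    ∫ ω, cos (t * (U ω - V ω)) ∂μ = (∫ ω, cos (t * U ω) ∂μ) * (∫ ω, cos (t * V ω) ∂μ)
      + (∫ ω, sin (t * U ω) ∂μ) * (∫ ω, sin (t * V ω) ∂μ) := by
  have hcos : Integrable (fun ω => cos (t * U ω) * cos (t * V ω)) μ :=
    .of_bound (by fun_prop) 1 (ae_of_all _ fun ω => by
      rw [norm_mul]; exact mul_le_one₀ (abs_cos_le_one _) (norm_nonneg _) (abs_cos_le_one _))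
  have hsin : Integrable (fun ω => sin (t * U ω) * sin (t * V ω)) μ :=
    .of_bound (by fun_prop) 1 (ae_of_all _ fun ω => by
      rw [norm_mul]; exact mul_le_one₀ (abs_sin_le_one _) (norm_nonneg _) (abs_sin_le_one _))
  rw [hUV.integral_cos_mul_integral_cos hU hV, hUV.integral_sin_mul_integral_sin hU hV,
    ← integral_add hcos hsin]
  simp only [mul_sub, cos_sub]

lemma integrable_integral_cos_mul_integral_cos_mul_exp (hγ : 0 < γ)
    (hUV : IndepFun U V μ) (hU : Measurable U) (hV : Measurable V) :
    Integrable fun t => (∫ ω, cos (t * U ω) ∂μ) * (∫ ω, cos (t * V ω) ∂μ) * exp (-γ * t ^ 2) := by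
  simp only [hUV.integral_cos_mul_integral_cos_mul_exp hU hV]
  exact (integrable_cos_mul_cos_mul_exp_neg_mul_sq_prod hγ hU hV).integral_prod_left

lemma integral_integral_cos_mul_integral_cos_mul_exp (hγ : 0 < γ)
    (hUV : IndepFun U V μ) (hU : Measurable U) (hV : Measurable V) :
    ∫ t, (∫ ω, cos (t * U ω) ∂μ) * (∫ ω, cos (t * V ω) ∂μ) * exp (-γ * t ^ 2) =
      √(π / γ) / 2 *
        ∫ ω, (exp (-(U ω - V ω) ^ 2 / (4 * γ)) + exp (-(U ω + V ω) ^ 2 / (4 * γ))) ∂μ := by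
  simp only [hUV.integral_cos_mul_integral_cos_mul_exp hU hV]
  rw [integral_integral_swap (integrable_cos_mul_cos_mul_exp_neg_mul_sq_prod hγ hU hV),
    ← integral_const_mul]
  simp only [integral_cos_mul_cos_mul_exp_neg_mul_sq hγ]

end ProbabilityTheory.IndepFun

section IidCoordinates

variable {ι : Type*} [Fintype ι] {P : Measure ℝ} [IsProbabilityMeasure P] {f : ℝ → ℝ}

lemma integral_cos_mul_comp_eval (hf : Measurable f) (i : ι) (t : ℝ) :
    ∫ v, cos (t * f (v i)) ∂(Measure.pi fun _ => P) =
      (∫ x, Complex.exp (Complex.I * t * f x) ∂P).re := by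
  rw [re_integral_cexp_I_mul hf]
  exact integral_comp_eval (μ := fun _ : ι => P) (f := fun x => cos (t * f x)) (by fun_prop)

lemma integral_sin_mul_comp_eval (hf : Measurable f) (i : ι) (t : ℝ) :
    ∫ v, sin (t * f (v i)) ∂(Measure.pi fun _ => P) =
      (∫ x, Complex.exp (Complex.I * t * f x) ∂P).im := by
  rw [im_integral_cexp_I_mul hf]
  exact integral_comp_eval (μ := fun _ : ι => P) (f := fun x => sin (t * f x)) (by fun_prop)

lemma sq_norm_integral_cexp_I_mul (hf : Measurable f) {i j : ι} (hij : i ≠ j) (t : ℝ) :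
    ‖∫ x, Complex.exp (Complex.I * t * f x) ∂P‖ ^ 2 =
      ∫ v, cos (t * (f (v i) - f (v j))) ∂(Measure.pi fun _ => P) := by
  have hind := iIndepFun_pi (μ := fun _ : ι => P) (X := fun _ => f) fun _ => hf.aemeasurable
  rw [(hind.indepFun hij).integral_cos_mul_sub (by fun_prop) (by fun_prop),
    integral_cos_mul_comp_eval hf, integral_cos_mul_comp_eval hf,
    integral_sin_mul_comp_eval hf, integral_sin_mul_comp_eval hf,
    Complex.sq_norm, Complex.normSq_apply]

lemma integral_norm_sq_sub_re_sq_mul_exp_neg_mul_sq {γ : ℝ} (hγ : 0 < γ) (hf : Measurable f)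
    {φ : ℝ → ℂ} (hφ : ∀ t : ℝ, φ t = ∫ x, Complex.exp (Complex.I * t * f x) ∂P) :
    let μ := Measure.pi fun _ : Fin 4 => P
    ∫ t, (‖φ t‖ ^ 2 - (φ t).re) ^ 2 * exp (-γ * t ^ 2) =
      √(π / γ) / 2 * ∫ v, (exp (-(f (v 0) - f (v 1) - (f (v 2) - f (v 3))) ^ 2 / (4 * γ))
          + exp (-(f (v 0) - f (v 1) + (f (v 2) - f (v 3))) ^ 2 / (4 * γ))) ∂μ
        - 2 * (√(π / γ) / 2 * ∫ v, (exp (-(f (v 0) - f (v 1) - f (v 2)) ^ 2 / (4 * γ))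
          + exp (-(f (v 0) - f (v 1) + f (v 2)) ^ 2 / (4 * γ))) ∂μ)
        + √(π / γ) / 2 * ∫ v, (exp (-(f (v 0) - f (v 1)) ^ 2 / (4 * γ))
          + exp (-(f (v 0) + f (v 1)) ^ 2 / (4 * γ))) ∂μ := by
  intro μ
  have hY (i : Fin 4) : Measurable fun v : Fin 4 → ℝ => f (v i) := by fun_prop
  have hind : iIndepFun (fun i (v : Fin 4 → ℝ) => f (v i)) μ :=
    iIndepFun_pi fun _ => hf.aemeasurable
  have hAA : IndepFun (fun v => f (v 0) - f (v 1)) (fun v => f (v 2) - f (v 3)) μ :=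
    (hind.indepFun_prodMk_prodMk hY 0 1 2 3 (by decide) (by decide) (by decide) (by decide)).comp
      measurable_sub measurable_sub
  have hAB : IndepFun (fun v => f (v 0) - f (v 1)) (fun v => f (v 2)) μ :=
    (hind.indepFun_prodMk hY 0 1 2 (by decide) (by decide)).comp measurable_sub measurable_id
  have hBB : IndepFun (fun v => f (v 0)) (fun v => f (v 1)) μ := hind.indepFun (by decide)
  have hexpand (t : ℝ) : (‖φ t‖ ^ 2 - (φ t).re) ^ 2 * exp (-γ * t ^ 2) =
      (∫ v, cos (t * (f (v 0) - f (v 1))) ∂μ) * (∫ v, cos (t * (f (v 2) - f (v 3))) ∂μ)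
          * exp (-γ * t ^ 2)
        - 2 * ((∫ v, cos (t * (f (v 0) - f (v 1))) ∂μ) * (∫ v, cos (t * f (v 2)) ∂μ)
          * exp (-γ * t ^ 2))
        + (∫ v, cos (t * f (v 0)) ∂μ) * (∫ v, cos (t * f (v 1)) ∂μ) * exp (-γ * t ^ 2) := by
    rw [hφ, ← sq_norm_integral_cexp_I_mul hf (by decide : (0 : Fin 4) ≠ 1),
      ← sq_norm_integral_cexp_I_mul hf (by decide : (2 : Fin 4) ≠ 3),
      integral_cos_mul_comp_eval hf, integral_cos_mul_comp_eval hf, integral_cos_mul_comp_eval hf]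
    ring
  have iAA := hAA.integrable_integral_cos_mul_integral_cos_mul_exp hγ (by fun_prop) (by fun_prop)
  have iAB := hAB.integrable_integral_cos_mul_integral_cos_mul_exp hγ (by fun_prop) (hY 2)
  have iBB := hBB.integrable_integral_cos_mul_integral_cos_mul_exp hγ (hY 0) (hY 1)
  rw [integral_congr_ae (ae_of_all _ hexpand), integral_add (iAA.sub' (iAB.const_mul 2)) iBB,
    integral_sub iAA (iAB.const_mul 2), integral_const_mul,
    hAA.integral_integral_cos_mul_integral_cos_mul_exp hγ (by fun_prop) (by fun_prop),
    hAB.integral_integral_cos_mul_integral_cos_mul_exp hγ (by fun_prop) (hY 2),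
    hBB.integral_integral_cos_mul_integral_cos_mul_exp hγ (hY 0) (hY 1)]

end IidCoordinates

theorem exp_test_population_limit_w2_general (P : Measure ℝ) [IsProbabilityMeasure P]
    (σ : ℝ) (γ : ℝ) (hγ : 0 < γ)
    (ψ : ℝ → ℂ)
    (hψ : ∀ t : ℝ, ψ t = ∫ x, Complex.exp (Complex.I * t * (x / σ)) ∂P) :
    ∫ t : ℝ, ((‖ψ t‖) ^ 2 - (ψ t).re) ^ 2 * Real.exp (-γ * t ^ 2) =
      (1 / 2) * Real.sqrt (π / γ) * (∫ v : Fin 4 → ℝ,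
            (Real.exp (-((v 0 - v 1) / σ) ^ 2 / (4 * γ))
              + Real.exp (-((v 0 + v 1) / σ) ^ 2 / (4 * γ)))
          ∂(Measure.pi fun _ => P))
      - Real.sqrt (π / γ) * (∫ v : Fin 4 → ℝ,
            (Real.exp (-((v 0 - v 1 - v 2) / σ) ^ 2 / (4 * γ))
              + Real.exp (-((v 0 - v 1 + v 2) / σ) ^ 2 / (4 * γ)))
          ∂(Measure.pi fun _ => P))
      + (1 / 2) * Real.sqrt (π / γ) * (∫ v : Fin 4 → ℝ,
            (Real.exp (-((v 0 - v 1 - v 2 + v 3) / σ) ^ 2 / (4 * γ))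
              + Real.exp (-((v 0 - v 1 + v 2 - v 3) / σ) ^ 2 / (4 * γ)))
          ∂(Measure.pi fun _ => P)) := by
  have hψ' (t : ℝ) : ψ t = ∫ x, Complex.exp (Complex.I * t * (x / σ : ℝ)) ∂P := by
    rw [hψ]; push_cast; rfl
  rw [integral_norm_sq_sub_re_sq_mul_exp_neg_mul_sq hγ (by fun_prop) hψ']
  simp only [← sub_div, ← add_div, ← sub_add, ← add_sub_assoc]
  ring

/-- Let `X, X₁, X₂, X₃, X₄` be i.i.d. real random variables with common
law `P` (the i.i.d. structure being encoded by the measure `P` and its fourfold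
product), `σ > 0`, `ψ(t) = E[e^{itX/σ}]`, `γ > 0`.  Then
`∫ (|ψ(t)|² − Re ψ(t))² e^{−γt²} dt` equals the stated combination of expectations of
Gaussian kernels evaluated at the signed sums of `X₁,…,X₄`. -/
theorem exp_test_population_limit_w2 (P : Measure ℝ) [IsProbabilityMeasure P]
    (σ : ℝ) (hσ : 0 < σ) (γ : ℝ) (hγ : 0 < γ)
    (ψ : ℝ → ℂ)
    (hψ : ∀ t : ℝ, ψ t = ∫ x, Complex.exp (Complex.I * t * (x / σ)) ∂P) :
    ∫ t : ℝ, ((‖ψ t‖) ^ 2 - (ψ t).re) ^ 2 * Real.exp (-γ * t ^ 2) =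
      (1 / 2) * Real.sqrt (π / γ) * (∫ v : Fin 4 → ℝ,
            (Real.exp (-((v 0 - v 1) / σ) ^ 2 / (4 * γ))
              + Real.exp (-((v 0 + v 1) / σ) ^ 2 / (4 * γ)))
          ∂(Measure.pi fun _ => P))
      - Real.sqrt (π / γ) * (∫ v : Fin 4 → ℝ,
            (Real.exp (-((v 0 - v 1 - v 2) / σ) ^ 2 / (4 * γ))
              + Real.exp (-((v 0 - v 1 + v 2) / σ) ^ 2 / (4 * γ)))
          ∂(Measure.pi fun _ => P))
      + (1 / 2) * Real.sqrt (π / γ) * (∫ v : Fin 4 → ℝ,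
            (Real.exp (-((v 0 - v 1 - v 2 + v 3) / σ) ^ 2 / (4 * γ))
              + Real.exp (-((v 0 - v 1 + v 2 - v 3) / σ) ^ 2 / (4 * γ)))
          ∂(Measure.pi fun _ => P)) :=
  exp_test_population_limit_w2_general P σ γ hγ ψ hψ
end
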